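/- Integral (space-time Galerkin) reformulation of the Gauss collocation scheme for the u-equation (identity (3.8)): under the abstract Gauss collocation SAV scheme, for every n = 1,...,N and every V-valued polynomial v_h of degree ≤ k on I_n, ∫_{I_n} i⟨u_h'(t), v_h(t)⟩ dt + ∫_{I_n} a((P^n u_h)(t), v_h(t)) dt − (τ/2)·Σ_{j=1}^k w_j · r_h(t_{nj}) · ⟨G(u_h(t_{nj})), v_h(t_{nj})⟩ = 0, where w_1, ..., w_k are the Gauss weights. -/

import Mathlib

/-!
Integral (space-time Galerkin) reformulation of the Gauss collocation scheme for the
u-equation (identity (3.8)):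
`∫_{I_n} i⟨u_h', v_h⟩ dt + ∫_{I_n} a(P^n u_h, v_h) dt
   − (τ/2) Σ_j w_j r_h(t_nj) ⟨G(u_h(t_nj)), v_h(t_nj)⟩ = 0`
for every V-valued polynomial `v_h` of degree ≤ k.
-/

open MeasureTheory

/-- The (unnormalized) Legendre polynomial of degree `k`: `d^k/dx^k [(x² - 1)^k]`. -/
noncomputable def legendre (k : ℕ) : Polynomial ℝ :=
  Polynomial.derivative^[k] ((Polynomial.X ^ 2 - 1 : Polynomial ℝ) ^ k)

/-- `f : ℝ → X` is an `X`-valued polynomial of degree at most `m`. -/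
def IsPolyDeg (X : Type*) [AddCommGroup X] [Module ℝ X] (m : ℕ) (f : ℝ → X) : Prop :=
  ∃ φ : Fin (m + 1) → X, ∀ t : ℝ, f t = ∑ i : Fin (m + 1), t ^ (i : ℕ) • φ i

/-- `p` is the L²(a,b)-orthogonal projection of `u` onto `X`-valued polynomials of
degree ≤ k-1. -/
def IsL2ProjOn (X : Type*) [NormedAddCommGroup X] [InnerProductSpace ℂ X]
    (a b : ℝ) (k : ℕ) (u p : ℝ → X) : Prop :=
  IsPolyDeg X (k - 1) p ∧
    ∀ χ : ℝ → X, IsPolyDeg X (k - 1) χ →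
      (∫ t in a..b, (inner ℂ (u t - p t) (χ t) : ℂ)) = 0

/-- The Gauss weight `w_j = ∫_{-1}^{1} ∏_{i ≠ j} (x - c_i)/(c_j - c_i) dx`. -/
noncomputable def gaussWeight (k : ℕ) (c : Fin k → ℝ) (j : Fin k) : ℝ :=
  ∫ x in (-1 : ℝ)..1, ∏ i ∈ Finset.univ.erase j, (x - c i) / (c j - c i)

/-- The `j`-th Gauss collocation point `t_{nj} = t_{n-1} + (1 + c_j) τ / 2` of the
interval `I_n = [(n-1)τ, nτ]`. -/
noncomputable def collocPt (τ : ℝ) (n : ℕ) (cj : ℝ) : ℝ :=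
  ((n : ℝ) - 1) * τ + (1 + cj) * τ / 2

/-!
On each interval the discrete solution is a polynomial `p` of degree `≤ k`, so `p - Pⁿ p` has
degree `≤ k` and is orthogonal to all polynomials of degree `≤ k - 1`; testing it against Lagrange
basis polynomials and using Gauss quadrature (exact up to degree `2k - 1`, with positive weights)
shows that it vanishes at the Gauss points. The integrand `i⟨p', v⟩ + a(Pⁿ p, v)` has degree
`≤ 2k - 1`, hence its integral is computed exactly by the Gauss rule, and at the Gauss points
`Pⁿ p = u_h`, so the collocation equations turn the quadrature sum into the `G`-term.
-/

open Polynomial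

namespace Polynomial

lemma integral_derivative_mul_eval (P Q : ℝ[X]) (a b : ℝ) :
    ∫ x in a..b, (derivative P).eval x * Q.eval x
      = P.eval b * Q.eval b - P.eval a * Q.eval a
        - ∫ x in a..b, P.eval x * (derivative Q).eval x := by
  have h := intervalIntegral.integral_mul_deriv_eq_deriv_mul (a := a) (b := b)
    (fun x _ => P.hasDerivAt x) (fun x _ => Q.hasDerivAt x)
    ((derivative P).continuous.intervalIntegrable _ _)
    ((derivative Q).continuous.intervalIntegrable _ _)
  linarith

end Polynomial

lemma eval_iterate_derivative_X_sq_sub_one_pow_eq_zero {k m : ℕ} (hm : m < k) {x : ℝ}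
    (hx : x = 1 ∨ x = -1) :
    (derivative^[m] ((X ^ 2 - 1 : ℝ[X]) ^ k)).eval x = 0 := by
  have hne : ((X ^ 2 - 1 : ℝ[X]) ^ k) ≠ 0 :=
    pow_ne_zero _ fun h => by simpa using congrArg (eval 0) h
  have hroot : (X - C x) ∣ (X ^ 2 - 1 : ℝ[X]) :=
    dvd_iff_isRoot.mpr (by rcases hx with rfl | rfl <;> norm_num)
  have hmult : k ≤ ((X ^ 2 - 1 : ℝ[X]) ^ k).rootMultiplicity x :=
    (le_rootMultiplicity_iff hne).mpr (pow_dvd_pow_of_dvd hroot k)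
  exact isRoot_iterate_derivative_of_lt_rootMultiplicity (hm.trans_le hmult)

/-- Each integration by parts moves one derivative from `(X² - 1)ᵏ` to `Q`; the boundary terms
vanish because `±1` are roots of `(X² - 1)ᵏ` of multiplicity `k`. -/
lemma integral_eval_iterate_derivative_mul_eq_zero {k m : ℕ} (hm : m ≤ k) (Q : ℝ[X])
    (hQ : derivative^[m] Q = 0) :
    ∫ x in (-1 : ℝ)..1, (derivative^[m] ((X ^ 2 - 1 : ℝ[X]) ^ k)).eval x * Q.eval x = 0 := by
  induction m generalizing Q with
  | zero => simp_all
  | succ m ih =>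
    rw [Function.iterate_succ_apply', integral_derivative_mul_eval,
      eval_iterate_derivative_X_sq_sub_one_pow_eq_zero (by omega) (Or.inl rfl),
      eval_iterate_derivative_X_sq_sub_one_pow_eq_zero (by omega) (Or.inr rfl),
      ih (by omega) _ hQ]
    ring

lemma integral_legendre_mul_eq_zero {k : ℕ} (Q : ℝ[X]) (hQ : Q.natDegree < k) :
    ∫ x in (-1 : ℝ)..1, (legendre k).eval x * Q.eval x = 0 :=
  integral_eval_iterate_derivative_mul_eq_zero le_rfl Q (iterate_derivative_eq_zero hQ)

lemma natDegree_X_sq_sub_one_pow (k : ℕ) : ((X ^ 2 - 1 : ℝ[X]) ^ k).natDegree = k + k := by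
  rw [natDegree_pow, show (X ^ 2 - 1 : ℝ[X]) = X ^ 2 - C 1 by simp, natDegree_X_pow_sub_C]
  ring

lemma coeff_legendre_self_ne_zero (k : ℕ) : (legendre k).coeff k ≠ 0 := by
  have hmonic : ((X ^ 2 - 1 : ℝ[X]) ^ k).Monic := by
    simpa using (monic_X_pow_sub_C (1 : ℝ) two_ne_zero).pow k
  have hlead := hmonic.coeff_natDegree
  rw [natDegree_X_sq_sub_one_pow] at hlead
  rw [legendre, coeff_iterate_derivative, hlead, nsmul_one]
  exact_mod_cast Nat.descFactorial_eq_zero_iff_lt.not.mpr (by omega)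

lemma legendre_ne_zero (k : ℕ) : legendre k ≠ 0 := fun h =>
  coeff_legendre_self_ne_zero k (by rw [h, coeff_zero])

lemma natDegree_legendre (k : ℕ) : (legendre k).natDegree = k := by
  refine le_antisymm ?_ (le_natDegree_of_ne_zero (coeff_legendre_self_ne_zero k))
  have := natDegree_iterate_derivative ((X ^ 2 - 1 : ℝ[X]) ^ k) k
  rw [natDegree_X_sq_sub_one_pow] at this
  rw [legendre]
  omega

section GaussQuadrature

variable {k : ℕ} {c : Fin k → ℝ}

lemma gaussWeight_eq_integral_basis (j : Fin k) :
    gaussWeight k c j = ∫ x in (-1 : ℝ)..1, (Lagrange.basis Finset.univ c j).eval x := by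
  simp only [gaussWeight, Lagrange.basis, eval_prod, Lagrange.basisDivisor, eval_mul, eval_C,
    eval_sub, eval_X, div_eq_inv_mul]

lemma integral_eq_sum_gaussWeight_of_degree_lt (hc : Function.Injective c) (P : ℝ[X])
    (hP : P.degree < k) :
    ∫ x in (-1 : ℝ)..1, P.eval x = ∑ j, gaussWeight k c j * P.eval (c j) := by
  have hinterp := Lagrange.eq_interpolate (s := Finset.univ) hc.injOn (by simpa using hP)
  conv_lhs => rw [hinterp, Lagrange.interpolate_apply]
  simp only [eval_finsetSum, eval_mul, eval_C]
  rw [intervalIntegral.integral_finsetSum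
    (f := fun j x => P.eval (c j) * (Lagrange.basis Finset.univ c j).eval x)
    fun j _ => (continuous_const.mul (Polynomial.continuous _)).intervalIntegrable _ _]
  refine Finset.sum_congr rfl fun j _ => ?_
  rw [intervalIntegral.integral_const_mul, gaussWeight_eq_integral_basis, mul_comm]

/-- Divide by the normalized Legendre polynomial: the quotient term integrates to zero by
orthogonality and vanishes at the nodes, and the remainder has degree `< k`, where the rule is
interpolatory. -/
theorem integral_eq_sum_gaussWeight (hc : Function.Injective c)
    (hroot : ∀ j, (legendre k).eval (c j) = 0) (P : ℝ[X]) (hP : P.natDegree < 2 * k) :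
    ∫ x in (-1 : ℝ)..1, P.eval x = ∑ j, gaussWeight k c j * P.eval (c j) := by
  set M := legendre k * C (legendre k).leadingCoeff⁻¹
  have hM : M.Monic := monic_mul_leadingCoeff_inv (legendre_ne_zero k)
  have hMdeg : M.natDegree = k := by
    rw [natDegree_mul_leadingCoeff_inv _ (legendre_ne_zero k), natDegree_legendre]
  have hQ : (P /ₘ M).natDegree < k := by rw [natDegree_divByMonic P hM]; omega
  have hR : (P %ₘ M).degree < k := by
    simpa [degree_eq_natDegree hM.ne_zero, hMdeg] using degree_modByMonic_lt P hM
  have hMQ : ∫ x in (-1 : ℝ)..1, (M * (P /ₘ M)).eval x = 0 := by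
    simp only [M, eval_mul, eval_C, mul_right_comm _ (legendre k).leadingCoeff⁻¹]
    rw [intervalIntegral.integral_mul_const, integral_legendre_mul_eq_zero _ hQ, zero_mul]
  have hnode : ∀ j, P.eval (c j) = (P %ₘ M).eval (c j) := fun j => by
    conv_lhs => rw [← modByMonic_add_div P M]
    simp [M, hroot j]
  conv_lhs => rw [← modByMonic_add_div P M]
  simp only [eval_add]
  rw [intervalIntegral.integral_add ((Polynomial.continuous _).intervalIntegrable _ _)
      ((Polynomial.continuous _).intervalIntegrable _ _), hMQ, add_zero,
    integral_eq_sum_gaussWeight_of_degree_lt hc _ hR]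
  simp only [hnode]

lemma Lagrange.eval_basis_univ {k : ℕ} {s : Fin k → ℝ} (hs : Function.Injective s) (i j : Fin k) :
    (Lagrange.basis Finset.univ s j).eval (s i) = if i = j then 1 else 0 := by
  split_ifs with h
  · subst h; exact Lagrange.eval_basis_self hs.injOn (Finset.mem_univ _)
  · exact Lagrange.eval_basis_of_ne (Ne.symm h) (Finset.mem_univ _)

lemma gaussWeight_pos (hc : Function.Injective c) (hroot : ∀ j, (legendre k).eval (c j) = 0)
    {j : Fin k} (hcj : c j ∈ Set.Icc (-1 : ℝ) 1) : 0 < gaussWeight k c j := by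
  set ℓ := Lagrange.basis Finset.univ c j
  have hℓ : ∀ i, ℓ.eval (c i) = if i = j then 1 else 0 := fun i => Lagrange.eval_basis_univ hc i j
  have hdeg : (ℓ ^ 2).natDegree < 2 * k := by
    rw [natDegree_pow, Lagrange.natDegree_basis hc.injOn (Finset.mem_univ _)]
    simp only [Finset.card_univ, Fintype.card_fin]
    have := j.pos
    omega
  have hsq := integral_eq_sum_gaussWeight hc hroot _ hdeg
  simp only [eval_pow, hℓ, ite_pow, one_pow, zero_pow two_ne_zero, mul_ite, mul_one,
    mul_zero, Finset.sum_ite_eq', Finset.mem_univ, if_true] at hsq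
  rw [← hsq]
  refine intervalIntegral.integral_pos (by norm_num) (by fun_prop) (fun x _ => sq_nonneg _)
    ⟨c j, hcj, ?_⟩
  simp [hℓ]

theorem integral_interval_eq_sum_gaussWeight (hc : Function.Injective c)
    (hroot : ∀ j, (legendre k).eval (c j) = 0) (t0 τ : ℝ) (P : ℝ[X]) (hP : P.natDegree < 2 * k) :
    ∫ t in t0..t0 + τ, P.eval t
      = τ / 2 * ∑ j, gaussWeight k c j * P.eval (t0 + (1 + c j) * τ / 2) := by
  rcases eq_or_ne τ 0 with rfl | hτ
  · simp
  set A : ℝ[X] := C (τ / 2) * X + C (t0 + τ / 2)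
  have hA : ∀ x, A.eval x = τ / 2 * x + (t0 + τ / 2) := fun x => by simp [A]
  have hdeg : (P.comp A).natDegree < 2 * k := by
    refine (natDegree_comp_le).trans_lt ?_
    have : A.natDegree ≤ 1 := by simp only [A]; compute_degree
    nlinarith
  have hsub := intervalIntegral.integral_comp_mul_add (fun t => P.eval t)
    (div_ne_zero hτ two_ne_zero) (t0 + τ / 2) (a := -1) (b := 1)
  rw [show τ / 2 * -1 + (t0 + τ / 2) = t0 by ring, show τ / 2 * 1 + (t0 + τ / 2) = t0 + τ by ring,
    smul_eq_mul] at hsub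
  have hgauss := integral_eq_sum_gaussWeight hc hroot _ hdeg
  simp only [eval_comp, hA, hsub] at hgauss
  rw [inv_mul_eq_iff_eq_mul₀ (div_ne_zero hτ two_ne_zero)] at hgauss
  rw [hgauss]
  congr 1
  refine Finset.sum_congr rfl fun j _ => ?_
  ring_nf

end GaussQuadrature

section PolyFun

variable {X Y Z : Type*} [AddCommGroup X] [Module ℝ X] [AddCommGroup Y] [Module ℝ Y]
  [AddCommGroup Z] [Module ℝ Z]

variable (X) in
def polyEval (m : ℕ) : (Fin (m + 1) → X) →ₗ[ℝ] ℝ → X where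
  toFun φ := ∑ i : Fin (m + 1), fun t => t ^ (i : ℕ) • φ i
  map_add' φ ψ := by ext t; simp [Finset.sum_apply, smul_add, Finset.sum_add_distrib]
  map_smul' r φ := by ext t; simp [Finset.smul_sum, smul_comm r]

lemma polyEval_eq_sum {m : ℕ} (φ : Fin (m + 1) → X) :
    polyEval X m φ = ∑ i : Fin (m + 1), fun t => t ^ (i : ℕ) • φ i :=
  rfl

lemma polyEval_apply {m : ℕ} (φ : Fin (m + 1) → X) (t : ℝ) :
    polyEval X m φ t = ∑ i : Fin (m + 1), t ^ (i : ℕ) • φ i := by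
  simp [polyEval, Finset.sum_apply]

variable (X) in
/-- `IsPolyDeg X m` as a submodule, so that closure under linear combinations comes for free. -/
def polyFun (m : ℕ) : Submodule ℝ (ℝ → X) := LinearMap.range (polyEval X m)

lemma isPolyDeg_iff_mem_polyFun {m : ℕ} {f : ℝ → X} : IsPolyDeg X m f ↔ f ∈ polyFun X m := by
  simp only [IsPolyDeg, polyFun, polyEval, LinearMap.mem_range, LinearMap.coe_mk, AddHom.coe_mk,
    funext_iff, Finset.sum_apply, eq_comm]

lemma monomial_mem_polyFun {m i : ℕ} (hi : i ≤ m) (v : X) :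
    (fun t : ℝ => t ^ i • v) ∈ polyFun X m := by
  refine ⟨Pi.single ⟨i, by omega⟩ v, ?_⟩
  ext t
  rw [polyEval_apply, Fintype.sum_eq_single ⟨i, by omega⟩ fun j hj => by
    rw [Pi.single_eq_of_ne hj, smul_zero]]
  simp

lemma polyFun_mono {m m' : ℕ} (h : m ≤ m') : polyFun X m ≤ polyFun X m' := by
  rintro _ ⟨φ, rfl⟩
  rw [polyEval_eq_sum]
  exact Submodule.sum_mem _ fun i _ =>
    monomial_mem_polyFun (i := i) (by have := i.isLt; omega) (φ i)

lemma eval_smul_mem_polyFun {m : ℕ} (P : ℝ[X]) (hP : P.natDegree ≤ m) (v : X) :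
    (fun t => P.eval t • v) ∈ polyFun X m := by
  have : (fun t => P.eval t • v) = ∑ i ∈ Finset.range (P.natDegree + 1),
      fun t : ℝ => t ^ i • (P.coeff i • v) := by
    ext t
    simp [eval_eq_sum_range, Finset.sum_apply, Finset.sum_smul, smul_smul, mul_comm]
  rw [this]
  exact Submodule.sum_mem _ fun i hi =>
    monomial_mem_polyFun (by rw [Finset.mem_range] at hi; omega) _

lemma linearMap_comp_mem_polyFun (L : X →ₗ[ℝ] Y) {m : ℕ} {f : ℝ → X} (hf : f ∈ polyFun X m) :
    (fun t => L (f t)) ∈ polyFun Y m := by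
  obtain ⟨φ, rfl⟩ := hf
  exact ⟨fun i => L (φ i), by ext t; simp [polyEval_apply]⟩

lemma bilin_mem_polyFun (B : X →ₗ[ℝ] Y →ₗ[ℝ] Z) {d e : ℕ} {f : ℝ → X} {g : ℝ → Y}
    (hf : f ∈ polyFun X d) (hg : g ∈ polyFun Y e) :
    (fun t => B (f t) (g t)) ∈ polyFun Z (d + e) := by
  obtain ⟨φ, rfl⟩ := hf
  obtain ⟨ψ, rfl⟩ := hg
  have : (fun t => B (polyEval X d φ t) (polyEval Y e ψ t))
      = ∑ i : Fin (d + 1), ∑ j : Fin (e + 1), fun t : ℝ => t ^ ((j : ℕ) + i) • B (φ i) (ψ j) := by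
    ext t
    simp only [polyEval_apply, map_sum, map_smul, LinearMap.coe_sum, LinearMap.coe_smul,
      Finset.sum_apply, Pi.smul_apply, Finset.smul_sum, smul_smul, pow_add]
    rw [Finset.sum_comm]
  rw [this]
  exact Submodule.sum_mem _ fun i _ => Submodule.sum_mem _ fun j _ =>
    monomial_mem_polyFun (by have := i.isLt; have := j.isLt; omega) _

end PolyFun

section NormedPolyFun

variable {E : Type*} [NormedAddCommGroup E] [NormedSpace ℝ E]

lemma exists_hasDerivAt_of_mem_polyFun {m : ℕ} {f : ℝ → E} (hf : f ∈ polyFun E m) :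
    ∃ f' ∈ polyFun E (m - 1), ∀ t, HasDerivAt f (f' t) t := by
  obtain ⟨φ, rfl⟩ := hf
  refine ⟨∑ i : Fin (m + 1), fun t => t ^ ((i : ℕ) - 1) • (((i : ℕ) : ℝ) • φ i),
    Submodule.sum_mem _ fun i _ => monomial_mem_polyFun (by have := i.isLt; omega) _,
    fun t => ?_⟩
  rw [show polyEval E m φ = fun y => ∑ i : Fin (m + 1), y ^ (i : ℕ) • φ i from
    funext (polyEval_apply φ)]
  convert HasDerivAt.fun_sum fun (i : Fin (m + 1)) _ =>
    (hasDerivAt_pow (i : ℕ) t).smul_const (φ i) using 1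
  simp [Finset.sum_apply, smul_smul, mul_comm]

lemma continuous_of_mem_polyFun {m : ℕ} {f : ℝ → E} (hf : f ∈ polyFun E m) : Continuous f := by
  obtain ⟨f', -, hderiv⟩ := exists_hasDerivAt_of_mem_polyFun hf
  exact continuous_iff_continuousAt.mpr fun t => (hderiv t).continuousAt

theorem integral_interval_eq_sum_gaussWeight_smul [CompleteSpace E] {k : ℕ} {c : Fin k → ℝ}
    (hc : Function.Injective c) (hroot : ∀ j, (legendre k).eval (c j) = 0) (t0 τ : ℝ)
    {m : ℕ} (hm : m < 2 * k) {f : ℝ → E} (hf : f ∈ polyFun E m) :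
    ∫ t in t0..t0 + τ, f t
      = (τ / 2) • ∑ j, gaussWeight k c j • f (t0 + (1 + c j) * τ / 2) := by
  obtain ⟨φ, rfl⟩ := hf
  have hmonomial : ∀ i : Fin (m + 1), ∫ t in t0..t0 + τ, t ^ (i : ℕ)
      = τ / 2 * ∑ j, gaussWeight k c j * (t0 + (1 + c j) * τ / 2) ^ (i : ℕ) := fun i => by
    simpa using integral_interval_eq_sum_gaussWeight hc hroot t0 τ (X ^ (i : ℕ))
      (by have := i.isLt; rw [natDegree_X_pow]; omega)
  simp only [polyEval_apply]
  rw [intervalIntegral.integral_finsetSum (f := fun (i : Fin (m + 1)) t => t ^ (i : ℕ) • φ i)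
    fun i _ => ((continuous_pow _).smul continuous_const).intervalIntegrable _ _]
  simp only [intervalIntegral.integral_smul_const, hmonomial, Finset.smul_sum, Finset.mul_sum,
    Finset.sum_smul, smul_smul]
  rw [Finset.sum_comm]

end NormedPolyFun

section InnerProduct

variable {V : Type*} [NormedAddCommGroup V] [InnerProductSpace ℂ V]

lemma inner_mem_polyFun {d e : ℕ} {f g : ℝ → V} (hf : f ∈ polyFun V d) (hg : g ∈ polyFun V e) :
    (fun t => inner ℂ (f t) (g t)) ∈ polyFun ℂ (d + e) :=
  bilin_mem_polyFun (LinearMap.mk₂ ℝ (fun x y : V => inner ℂ x y) inner_add_left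
    (fun r x y => by simp) inner_add_right (fun r x y => by simp)) hf hg

lemma hermitianForm_mem_polyFun (a : V → V → ℂ)
    (ha_add : ∀ v₁ v₂ w : V, a (v₁ + v₂) w = a v₁ w + a v₂ w)
    (ha_smul : ∀ (z : ℂ) (v w : V), a (z • v) w = z * a v w)
    (ha_herm : ∀ v w : V, a v w = starRingEnd ℂ (a w v))
    {d e : ℕ} {f g : ℝ → V} (hf : f ∈ polyFun V d) (hg : g ∈ polyFun V e) :
    (fun t => a (f t) (g t)) ∈ polyFun ℂ (d + e) := by
  have ha_real : ∀ (r : ℝ) (v w : V), a (r • v) w = r • a v w := fun r v w => by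
    rw [← Complex.coe_smul, ha_smul, Complex.real_smul]
  refine bilin_mem_polyFun (LinearMap.mk₂ ℝ a ha_add ha_real (fun v w₁ w₂ => ?_) fun r v w => ?_)
    hf hg
  · rw [ha_herm, ha_add, map_add, ← ha_herm, ← ha_herm]
  · rw [ha_herm, ha_real, Complex.real_smul, map_mul, Complex.conj_ofReal, ← ha_herm,
      Complex.real_smul]

end InnerProduct

/-- Test against `t ↦ ℓⱼ(t) • D(tⱼ)`, with `ℓⱼ` the Lagrange basis polynomial of the node `tⱼ`:
the integrand has degree `2k - 1`, so Gauss quadrature evaluates the integral exactly as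
`(τ/2) wⱼ ‖D(tⱼ)‖²`, and the weight is positive. -/
theorem eq_zero_at_gaussNode_of_orthogonal {V : Type*} [NormedAddCommGroup V]
    [InnerProductSpace ℂ V] {k : ℕ} {c : Fin k → ℝ} (hc : Function.Injective c)
    (hroot : ∀ j, (legendre k).eval (c j) = 0) {j : Fin k} (hcj : c j ∈ Set.Icc (-1 : ℝ) 1)
    {t0 τ : ℝ} (hτ : τ ≠ 0) {D : ℝ → V} (hD : D ∈ polyFun V k)
    (horth : ∀ χ ∈ polyFun V (k - 1), ∫ t in t0..t0 + τ, inner ℂ (D t) (χ t) = 0) :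
    D (t0 + (1 + c j) * τ / 2) = 0 := by
  set s : Fin k → ℝ := fun i => t0 + (1 + c i) * τ / 2
  have hs : Function.Injective s := fun i i' h => hc <| by
    simpa [s, hτ] using h
  set ℓ := Lagrange.basis Finset.univ s j
  have hχ : (fun t => ℓ.eval t • D (s j)) ∈ polyFun V (k - 1) :=
    eval_smul_mem_polyFun ℓ (by simp [ℓ, Lagrange.natDegree_basis hs.injOn]) _
  have hℓ : ∀ i, ℓ.eval (t0 + (1 + c i) * τ / 2) = if i = j then 1 else 0 :=
    fun i => Lagrange.eval_basis_univ hs i j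
  have hquad := horth _ hχ
  rw [integral_interval_eq_sum_gaussWeight_smul hc hroot t0 τ (by have := j.pos; omega)
    (inner_mem_polyFun hD hχ)] at hquad
  simpa [s, hℓ, hτ, (gaussWeight_pos hc hroot hcj).ne', apply_ite (inner ℂ _)] using hquad

lemma gaussNode_mem_Ioo {c t0 τ : ℝ} (hτ : 0 < τ) (hc : c ∈ Set.Ioo (-1 : ℝ) 1) :
    t0 + (1 + c) * τ / 2 ∈ Set.Ioo t0 (t0 + τ) := by
  obtain ⟨h₁, h₂⟩ := hc
  constructor <;> nlinarith

lemma IsL2ProjOn.eq_at_gaussNode {V : Type*} [NormedAddCommGroup V] [InnerProductSpace ℂ V]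
    {k : ℕ} {c : Fin k → ℝ} (hc : Function.Injective c)
    (hroot : ∀ j, (legendre k).eval (c j) = 0) {j : Fin k} (hcj : c j ∈ Set.Icc (-1 : ℝ) 1)
    {t0 τ : ℝ} (hτ : 0 < τ) {u P p : ℝ → V} (hP : IsL2ProjOn V t0 (t0 + τ) k u P)
    (hp : p ∈ polyFun V k) (hup : Set.EqOn u p (Set.Icc t0 (t0 + τ))) :
    P (t0 + (1 + c j) * τ / 2) = u (t0 + (1 + c j) * τ / 2) := by
  obtain ⟨hc₁, hc₂⟩ := hcj
  rw [hup ⟨by nlinarith, by nlinarith⟩, eq_comm, ← sub_eq_zero]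
  refine eq_zero_at_gaussNode_of_orthogonal hc hroot ⟨hc₁, hc₂⟩ hτ.ne'
    (sub_mem hp (polyFun_mono (Nat.sub_le k 1) (isPolyDeg_iff_mem_polyFun.mp hP.1)))
    fun χ hχ => ?_
  rw [← hP.2 χ (isPolyDeg_iff_mem_polyFun.mpr hχ)]
  refine intervalIntegral.integral_congr fun t ht => ?_
  rw [Set.uIcc_of_le (by linarith)] at ht
  simp only [hup ht, Pi.sub_apply]

/-- Off the endpoints `deriv u = p'`, so the integrand is a polynomial of degree `≤ 2k - 1`,
which the Gauss rule integrates exactly. -/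
theorem integral_galerkin_eq_gaussSum {V : Type*} [NormedAddCommGroup V]
    [InnerProductSpace ℂ V] (a : V → V → ℂ)
    (ha_add : ∀ v₁ v₂ w : V, a (v₁ + v₂) w = a v₁ w + a v₂ w)
    (ha_smul : ∀ (z : ℂ) (v w : V), a (z • v) w = z * a v w)
    (ha_herm : ∀ v w : V, a v w = starRingEnd ℂ (a w v))
    {k : ℕ} (hk : 1 ≤ k) {c : Fin k → ℝ} (hc : Function.Injective c)
    (hroot : ∀ j, (legendre k).eval (c j) = 0) (hmem : ∀ j, c j ∈ Set.Ioo (-1 : ℝ) 1)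
    {t0 τ : ℝ} (hτ : 0 < τ) {u p P v : ℝ → V} (hp : p ∈ polyFun V k)
    (hup : Set.EqOn u p (Set.Icc t0 (t0 + τ))) (hP : P ∈ polyFun V (k - 1))
    (hv : v ∈ polyFun V k) :
    (∫ t in t0..t0 + τ, Complex.I * inner ℂ (v t) (deriv u t))
        + ∫ t in t0..t0 + τ, a (P t) (v t)
      = (τ / 2) • ∑ j, gaussWeight k c j •
          (Complex.I * inner ℂ (v (t0 + (1 + c j) * τ / 2)) (deriv u (t0 + (1 + c j) * τ / 2))
            + a (P (t0 + (1 + c j) * τ / 2)) (v (t0 + (1 + c j) * τ / 2))) := by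
  obtain ⟨p', hp', hp_deriv⟩ := exists_hasDerivAt_of_mem_polyFun hp
  have hu_deriv : Set.EqOn (deriv u) p' (Set.Ioo t0 (t0 + τ)) := fun t ht =>
    (Filter.eventuallyEq_of_mem (Icc_mem_nhds ht.1 ht.2) hup).deriv_eq.trans (hp_deriv t).deriv
  have hI : (fun t => Complex.I * inner ℂ (v t) (p' t)) ∈ polyFun ℂ (2 * k - 1) :=
    polyFun_mono (by omega)
      (linearMap_comp_mem_polyFun (LinearMap.mulLeft ℝ Complex.I) (inner_mem_polyFun hv hp'))
  have ha : (fun t => a (P t) (v t)) ∈ polyFun ℂ (2 * k - 1) :=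
    polyFun_mono (by omega) (hermitianForm_mem_polyFun a ha_add ha_smul ha_herm hP hv)
  rw [intervalIntegral.integral_congr_Ioo_of_le (by linarith)
      (g := fun t => Complex.I * inner ℂ (v t) (p' t)) fun t ht => by simp only [hu_deriv ht],
    ← intervalIntegral.integral_add ((continuous_of_mem_polyFun hI).intervalIntegrable _ _)
      ((continuous_of_mem_polyFun ha).intervalIntegrable _ _),
    integral_interval_eq_sum_gaussWeight_smul hc hroot t0 τ (by omega)
      (f := fun t => Complex.I * inner ℂ (v t) (p' t) + a (P t) (v t)) (add_mem hI ha)]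
  simp only [hu_deriv (gaussNode_mem_Ioo hτ (hmem _))]

theorem galerkin_reformulation_u_equation_general
    (k N : ℕ) (hk : 1 ≤ k) (hN : 1 ≤ N) (T : ℝ) (hT : 0 < T)
    -- the Gauss points of [-1,1]: the k roots of the Legendre polynomial of degree k
    (c : Fin k → ℝ) (hmono : StrictMono c)
    (hroot : ∀ j, (legendre k).eval (c j) = 0)
    (hmem : ∀ j, c j ∈ Set.Ioo (-1 : ℝ) 1)
    -- V : a finite-dimensional complex inner product space
    (V : Type*) [NormedAddCommGroup V] [InnerProductSpace ℂ V]
    -- a : a Hermitian sesquilinear form (paper's convention: linear in the first argument)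
    (a : V → V → ℂ)
    (ha_add : ∀ v₁ v₂ w : V, a (v₁ + v₂) w = a v₁ w + a v₂ w)
    (ha_smul : ∀ (z : ℂ) (v w : V), a (z • v) w = z * a v w)
    (ha_herm : ∀ v w : V, a v w = starRingEnd ℂ (a w v))
    -- G : an arbitrary map
    -- (paper's ⟨x, y⟩, linear in x, is Mathlib's `inner y x`)
    (G : V → V)
    -- numerical solution: continuous, piecewise polynomial of degree ≤ k in time
    (uh : ℝ → V) (rh : ℝ → ℝ)
    (hupoly : ∀ n ∈ Finset.Icc 1 N, ∃ p : ℝ → V, IsPolyDeg V k p ∧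
      ∀ t ∈ Set.Icc (((n : ℝ) - 1) * (T / N)) ((n : ℝ) * (T / N)), uh t = p t)
    -- Gauss collocation equation (i):  i⟨u_h'(t_nj), v⟩ + a(u_h(t_nj), v)
    --   - r_h(t_nj) ⟨G(u_h(t_nj)), v⟩ = 0  for all v ∈ V
    (hu_eq : ∀ n ∈ Finset.Icc 1 N, ∀ j : Fin k, ∀ v : V,
      Complex.I * (inner ℂ v (deriv uh (collocPt (T / N) n (c j))) : ℂ)
        + a (uh (collocPt (T / N) n (c j))) v
        - (rh (collocPt (T / N) n (c j)) : ℂ)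
            * (inner ℂ v (G (uh (collocPt (T / N) n (c j)))) : ℂ) = 0) :
    -- conclusion: the integral (space-time Galerkin) identity (3.8)
    ∀ n ∈ Finset.Icc 1 N, ∀ Puh : ℝ → V,
      IsL2ProjOn V (((n : ℝ) - 1) * (T / N)) ((n : ℝ) * (T / N)) k uh Puh →
      ∀ vh : ℝ → V, IsPolyDeg V k vh →
        (∫ t in (((n : ℝ) - 1) * (T / N))..((n : ℝ) * (T / N)),
            Complex.I * (inner ℂ (vh t) (deriv uh t) : ℂ))
          + (∫ t in (((n : ℝ) - 1) * (T / N))..((n : ℝ) * (T / N)), a (Puh t) (vh t))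
          - ((T / N : ℝ) : ℂ) / 2 * ∑ j : Fin k,
              (gaussWeight k c j : ℂ) * (rh (collocPt (T / N) n (c j)) : ℂ)
                * (inner ℂ (vh (collocPt (T / N) n (c j)))
                    (G (uh (collocPt (T / N) n (c j)))) : ℂ) = 0 := by
  intro n hn Puh hPuh vh hvh
  set τ := T / N
  have hτ : 0 < τ := div_pos hT (by exact_mod_cast hN)
  obtain ⟨p, hp, hup⟩ := hupoly n hn
  rw [show (n : ℝ) * τ = ((n : ℝ) - 1) * τ + τ by ring] at hPuh hup ⊢
  rw [isPolyDeg_iff_mem_polyFun] at hp hvh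
  rw [integral_galerkin_eq_gaussSum a ha_add ha_smul ha_herm hk hmono.injective hroot hmem hτ hp
    hup (isPolyDeg_iff_mem_polyFun.mp hPuh.1) hvh]
  have hnode : ∀ j, Complex.I * inner ℂ (vh (collocPt τ n (c j))) (deriv uh (collocPt τ n (c j)))
      + a (Puh (collocPt τ n (c j))) (vh (collocPt τ n (c j)))
      = rh (collocPt τ n (c j)) * inner ℂ (vh (collocPt τ n (c j))) (G (uh (collocPt τ n (c j)))) :=
    fun j => by
      have hcolloc := hu_eq n hn j (vh (collocPt τ n (c j)))
      unfold collocPt at hcolloc ⊢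
      rw [hPuh.eq_at_gaussNode hmono.injective hroot (Set.Ioo_subset_Icc_self (hmem j)) hτ hp hup]
      linear_combination hcolloc
  simp only [collocPt] at hnode ⊢
  simp only [hnode, Complex.real_smul, Finset.mul_sum, ← mul_assoc]
  push_cast
  exact sub_self _

theorem galerkin_reformulation_u_equation
    (k N : ℕ) (hk : 1 ≤ k) (hN : 1 ≤ N) (T : ℝ) (hT : 0 < T)
    -- the Gauss points of [-1,1]: the k roots of the Legendre polynomial of degree k
    (c : Fin k → ℝ) (hmono : StrictMono c)
    (hroot : ∀ j, (legendre k).eval (c j) = 0)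
    (hmem : ∀ j, c j ∈ Set.Ioo (-1 : ℝ) 1)
    -- V : a finite-dimensional complex inner product space
    (V : Type*) [NormedAddCommGroup V] [InnerProductSpace ℂ V] [FiniteDimensional ℂ V]
    -- a : a Hermitian sesquilinear form (paper's convention: linear in the first argument)
    (a : V → V → ℂ)
    (ha_add : ∀ v₁ v₂ w : V, a (v₁ + v₂) w = a v₁ w + a v₂ w)
    (ha_smul : ∀ (z : ℂ) (v w : V), a (z • v) w = z * a v w)
    (ha_herm : ∀ v w : V, a v w = starRingEnd ℂ (a w v))
    -- G : an arbitrary map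
    -- (paper's ⟨x, y⟩, linear in x, is Mathlib's `inner y x`)
    (G : V → V)
    -- numerical solution: continuous, piecewise polynomial of degree ≤ k in time
    (uh : ℝ → V) (rh : ℝ → ℝ)
    (hupoly : ∀ n ∈ Finset.Icc 1 N, ∃ p : ℝ → V, IsPolyDeg V k p ∧
      ∀ t ∈ Set.Icc (((n : ℝ) - 1) * (T / N)) ((n : ℝ) * (T / N)), uh t = p t)
    (hrpoly : ∀ n ∈ Finset.Icc 1 N, ∃ q : ℝ → ℝ, IsPolyDeg ℝ k q ∧
      ∀ t ∈ Set.Icc (((n : ℝ) - 1) * (T / N)) ((n : ℝ) * (T / N)), rh t = q t)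
    -- Gauss collocation equation (i):  i⟨u_h'(t_nj), v⟩ + a(u_h(t_nj), v)
    --   - r_h(t_nj) ⟨G(u_h(t_nj)), v⟩ = 0  for all v ∈ V
    (hu_eq : ∀ n ∈ Finset.Icc 1 N, ∀ j : Fin k, ∀ v : V,
      Complex.I * (inner ℂ v (deriv uh (collocPt (T / N) n (c j))) : ℂ)
        + a (uh (collocPt (T / N) n (c j))) v
        - (rh (collocPt (T / N) n (c j)) : ℂ)
            * (inner ℂ v (G (uh (collocPt (T / N) n (c j)))) : ℂ) = 0)
    -- Gauss collocation equation (ii): r_h'(t_nj) = (1/2) Re ⟨G(u_h(t_nj)), u_h'(t_nj)⟩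
    (hr_eq : ∀ n ∈ Finset.Icc 1 N, ∀ j : Fin k,
      deriv rh (collocPt (T / N) n (c j))
        = (1 / 2) * ((inner ℂ (deriv uh (collocPt (T / N) n (c j)))
            (G (uh (collocPt (T / N) n (c j)))) : ℂ)).re) :
    -- conclusion: the integral (space-time Galerkin) identity (3.8)
    ∀ n ∈ Finset.Icc 1 N, ∀ Puh : ℝ → V,
      IsL2ProjOn V (((n : ℝ) - 1) * (T / N)) ((n : ℝ) * (T / N)) k uh Puh →
      ∀ vh : ℝ → V, IsPolyDeg V k vh →
        (∫ t in (((n : ℝ) - 1) * (T / N))..((n : ℝ) * (T / N)),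
            Complex.I * (inner ℂ (vh t) (deriv uh t) : ℂ))
          + (∫ t in (((n : ℝ) - 1) * (T / N))..((n : ℝ) * (T / N)), a (Puh t) (vh t))
          - ((T / N : ℝ) : ℂ) / 2 * ∑ j : Fin k,
              (gaussWeight k c j : ℂ) * (rh (collocPt (T / N) n (c j)) : ℂ)
                * (inner ℂ (vh (collocPt (T / N) n (c j)))
                    (G (uh (collocPt (T / N) n (c j)))) : ℂ) = 0 :=
  galerkin_reformulation_u_equation_general k N hk hN T hT c hmono hroot hmem V a ha_add ha_smul
    ha_herm G uh rh hupoly hu_eq
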